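/- Let f_c > 0, n ≥ 1, and let (x₁, y₁), …, (xₙ, yₙ) ∈ ℝ² be paired data samples. Write s^x_{ij} = sinc_{f_c}(x_i − x_j) and s^y_{ij} = sinc_{f_c}(y_i − y_j). Let a, b, e ∈ ℝⁿ have all entries nonzero, and suppose b and e satisfy the marginal BLML constraints Σ_{j=1}^n b_j s^x_{ij} = n / b_i and Σ_{j=1}^n e_j s^y_{ij} = n / e_i for every i. Define g_{XY}(x,y) = (1/n) Σᵢ a_i sinc_{f_c}(x − x_i) sinc_{f_c}(y − y_i), g_X(x) = (1/n) Σᵢ b_i sinc_{f_c}(x − x_i), and g_Y(y) = (1/n) Σᵢ e_i sinc_{f_c}(y − y_i). Then ∫∫_{ℝ²} g_{XY}(x,y) · g_X(x) · g_Y(y) dx dy = (1/n) Σ_{i=1}^n a_i / (b_i e_i). -/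

import Mathlib

open MeasureTheory

/-- The band-limited sinc kernel with cutoff frequency `fc`. -/
noncomputable def sincF (fc : ℝ) (x : ℝ) : ℝ :=
  if x = 0 then fc else Real.sin (Real.pi * fc * x) / (Real.pi * x)

/-!
Everything rests on the reproducing identity `∫ sinc(x - p) sinc(x - q) dx = sinc(p - q)`.
The shifted kernel `sinc_{2c}(· - a)` is the Fourier transform of the modulated box
`1_{[-c,c]}(t) e^{2πiat}`, so a product of two shifted kernels is the Fourier transform of the
convolution of two boxes. That convolution is a moving-window integral, hence continuous, and
Fourier inversion at `0` gives `∫ sinc(x - p) sinc(x - q) dx = ∫_{-c}^{c} e^{2πi(p-q)t} dt`.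
Expanding `g_{XY}`, the double integral splits into products of the one-dimensional integrals
`∫ sinc(x - x_i) g_X(x) dx`, which the reproducing identity and the BLML constraint turn
into `1 / b_i`.
-/

open Real Complex
open scoped FourierTransform Convolution

lemma sincF_neg (fc x : ℝ) : sincF fc (-x) = sincF fc x := by
  by_cases hx : x = 0
  · simp [hx]
  · simp [sincF, hx, neg_div_neg_eq]

lemma abs_sincF_le (fc x : ℝ) : |sincF fc x| ≤ |fc| := by
  by_cases hx : x = 0
  · simp [sincF, hx]
  · rw [sincF, if_neg hx, abs_div, div_le_iff₀ (by positivity)]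
    calc |Real.sin (π * fc * x)| ≤ |π * fc * x| := abs_sin_le_abs
      _ = |fc| * |π * x| := by simp only [abs_mul]; ring

lemma abs_sincF_mul_le_inv_pi (fc x : ℝ) : |sincF fc x * x| ≤ π⁻¹ := by
  by_cases hx : x = 0
  · simp [hx, pi_pos.le]
  · rw [sincF, if_neg hx, div_mul_eq_mul_div, mul_div_mul_right _ _ hx, abs_div,
      abs_of_pos pi_pos, div_eq_mul_inv]
    exact mul_le_of_le_one_left (by positivity) (abs_sin_le_one _)

lemma sincF_sq_mul_one_add_sq_le (fc x : ℝ) :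
    sincF fc x ^ 2 * (1 + x ^ 2) ≤ fc ^ 2 + π⁻¹ ^ 2 := by
  have h₁ : sincF fc x ^ 2 ≤ fc ^ 2 := sq_le_sq.mpr (abs_sincF_le fc x)
  have h₂ : (sincF fc x * x) ^ 2 ≤ π⁻¹ ^ 2 := by
    rw [← sq_abs]; have := abs_sincF_mul_le_inv_pi fc x; gcongr
  nlinarith

lemma measurable_sincF (fc : ℝ) : Measurable (sincF fc) :=
  Measurable.ite (measurableSet_singleton 0) measurable_const (by fun_prop)

lemma integrable_sincF_sq (fc : ℝ) : Integrable fun x => sincF fc x ^ 2 := by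
  refine (integrable_inv_one_add_sq.const_mul (fc ^ 2 + π⁻¹ ^ 2)).mono'
    ((measurable_sincF fc).pow_const 2).aestronglyMeasurable
    (Filter.Eventually.of_forall fun x => ?_)
  rw [Real.norm_eq_abs, abs_of_nonneg (sq_nonneg _), ← div_eq_mul_inv,
    le_div_iff₀ (by positivity)]
  exact sincF_sq_mul_one_add_sq_le fc x

lemma memLp_sincF_comp_sub (fc p : ℝ) : MemLp (fun x => sincF fc (x - p)) 2 := by
  refine (memLp_two_iff_integrable_sq ?_).2 ((integrable_sincF_sq fc).comp_sub_right p)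
  exact ((measurable_sincF fc).comp (measurable_sub_const p)).aestronglyMeasurable

lemma integrable_sincF_mul_sincF (fc p q : ℝ) :
    Integrable fun x => sincF fc (x - p) * sincF fc (x - q) :=
  (memLp_sincF_comp_sub fc p).integrable_mul (memLp_sincF_comp_sub fc q)

lemma integral_exp_two_pi_mul_I_eq_sincF (c δ : ℝ) :
    ∫ t in -c..c, exp (2 * π * δ * t * I) = sincF (2 * c) δ := by
  by_cases hδ : δ = 0
  · simp [hδ, sincF, ← two_mul]
  have hk : (2 * π * δ * I : ℂ) ≠ 0 := by simp [hδ, pi_ne_zero]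
  simp_rw [show ∀ t : ℝ, (2 * π * δ * t * I : ℂ) = 2 * π * δ * I * t from
    fun t => by ring]
  rw [integral_exp_mul_complex hk, sincF, if_neg hδ]
  push_cast
  rw [Complex.sin]
  field_simp
  ring_nf
  rw [I_sq]
  ring

noncomputable def modulatedBox (c a : ℝ) : ℝ → ℂ :=
  (Set.Icc (-c) c).indicator fun t => exp (2 * π * a * t * I)

lemma integrable_modulatedBox (c a : ℝ) : Integrable (modulatedBox c a) :=
  (integrable_indicator_iff measurableSet_Icc).2 (Continuous.integrableOn_Icc (by fun_prop))

lemma fourier_modulatedBox {c : ℝ} (hc : 0 ≤ c) (a x : ℝ) :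
    𝓕 (modulatedBox c a) x = sincF (2 * c) (x - a) := by
  have hmod : ∀ v : ℝ, exp (↑(-2 * π * v * x) * I) • modulatedBox c a v
      = (Set.Icc (-c) c).indicator (fun t => exp (2 * π * ((a - x : ℝ) : ℂ) * t * I)) v := by
    intro v
    simp only [modulatedBox, Set.indicator_apply, smul_eq_mul, mul_ite, mul_zero,
      ← Complex.exp_add]
    push_cast
    ring_nf
  rw [Real.fourier_real_eq_integral_exp_smul]
  simp_rw [hmod]
  rw [integral_indicator measurableSet_Icc, integral_Icc_eq_integral_Ioc,
    ← intervalIntegral.integral_of_le (by linarith), integral_exp_two_pi_mul_I_eq_sincF,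
    ← neg_sub, sincF_neg]

lemma modulatedBox_mul_comp_sub (c p q x t : ℝ) :
    modulatedBox c p t * modulatedBox c q (x - t)
      = exp (2 * π * q * x * I) *
        (Set.Icc (x - c) (x + c)).indicator (modulatedBox c (p - q)) t := by
  simp only [modulatedBox, Set.indicator_apply, Set.mem_Icc]
  split_ifs <;> first
    | (exfalso; grind)
    | simp only [mul_zero, zero_mul]
    | (rw [← Complex.exp_add, ← Complex.exp_add]; push_cast; ring_nf)

lemma modulatedBox_convolution_apply {c : ℝ} (hc : 0 ≤ c) (p q x : ℝ) :
    (modulatedBox c p ⋆[ContinuousLinearMap.mul ℂ ℂ] modulatedBox c q) x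
      = exp (2 * π * q * x * I) * ∫ t in x - c..x + c, modulatedBox c (p - q) t := by
  simp only [convolution_def, ContinuousLinearMap.mul_apply', modulatedBox_mul_comp_sub]
  rw [integral_const_mul, integral_indicator measurableSet_Icc, integral_Icc_eq_integral_Ioc,
    intervalIntegral.integral_of_le (by linarith)]

lemma continuous_modulatedBox_convolution {c : ℝ} (hc : 0 ≤ c) (p q : ℝ) :
    Continuous (modulatedBox c p ⋆[ContinuousLinearMap.mul ℂ ℂ] modulatedBox c q) := by
  have hint : ∀ a b, IntervalIntegrable (modulatedBox c (p - q)) volume a b :=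
    fun _ _ => (integrable_modulatedBox c (p - q)).intervalIntegrable
  have hprim := intervalIntegral.continuous_primitive hint 0
  have hconv : modulatedBox c p ⋆[ContinuousLinearMap.mul ℂ ℂ] modulatedBox c q =
      fun x : ℝ => exp (2 * π * q * x * I) * ((∫ t in 0..x + c, modulatedBox c (p - q) t)
        - ∫ t in 0..x - c, modulatedBox c (p - q) t) := funext fun x => by
    rw [modulatedBox_convolution_apply hc,
      intervalIntegral.integral_interval_sub_left (hint _ _) (hint _ _)]
  rw [hconv]
  fun_prop

lemma modulatedBox_convolution_zero {c : ℝ} (hc : 0 ≤ c) (p q : ℝ) :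
    (modulatedBox c p ⋆[ContinuousLinearMap.mul ℂ ℂ] modulatedBox c q) 0
      = sincF (2 * c) (p - q) := by
  rw [modulatedBox_convolution_apply hc, ← integral_exp_two_pi_mul_I_eq_sincF c (p - q)]
  simp only [ofReal_zero, mul_zero, zero_mul, Complex.exp_zero, one_mul, zero_sub, zero_add]
  refine intervalIntegral.integral_congr fun t ht => ?_
  rw [Set.uIcc_of_le (by linarith)] at ht
  simp [modulatedBox, ht]

lemma integral_sincF_mul_sincF {fc : ℝ} (hfc : 0 ≤ fc) (p q : ℝ) :
    ∫ x, sincF fc (x - p) * sincF fc (x - q) = sincF fc (p - q) := by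
  set w := modulatedBox (fc / 2) p ⋆[ContinuousLinearMap.mul ℂ ℂ] modulatedBox (fc / 2) q
  have hc : 0 ≤ fc / 2 := by positivity
  have h2c : 2 * (fc / 2) = fc := by ring
  have hw : Integrable w :=
    (integrable_modulatedBox _ p).integrable_convolution _ (integrable_modulatedBox _ q)
  have hFw : 𝓕 w = fun x => ((sincF fc (x - p) * sincF fc (x - q) : ℝ) : ℂ) := by
    ext x
    rw [Real.fourier_mul_convolution_eq (integrable_modulatedBox _ p)
      (integrable_modulatedBox _ q), fourier_modulatedBox hc, fourier_modulatedBox hc, h2c,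
      ofReal_mul]
  have hinv := hw.fourierInv_fourier_eq (hFw ▸ (integrable_sincF_mul_sincF fc p q).ofReal)
    (continuous_modulatedBox_convolution hc p q).continuousAt (v := 0)
  have hw0 : w 0 = sincF fc (p - q) := h2c ▸ modulatedBox_convolution_zero hc p q
  rw [Real.fourierInv_eq, hFw, hw0] at hinv
  simp only [inner_zero_right, AddChar.map_zero_eq_one, one_smul] at hinv
  exact_mod_cast hinv

lemma memLp_sum_sincF (fc : ℝ) {ι : Type*} (s : Finset ι) (w xs : ι → ℝ) :
    MemLp (fun x => ∑ j ∈ s, w j * sincF fc (x - xs j)) 2 :=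
  memLp_finsetSum s fun j _ => (memLp_sincF_comp_sub fc (xs j)).const_mul (w j)

lemma integral_sincF_mul_sum {fc : ℝ} (hfc : 0 ≤ fc) {ι : Type*} (s : Finset ι)
    (w xs : ι → ℝ) (p : ℝ) :
    ∫ x, sincF fc (x - p) * ∑ j ∈ s, w j * sincF fc (x - xs j)
      = ∑ j ∈ s, w j * sincF fc (p - xs j) := by
  simp_rw [Finset.mul_sum, mul_left_comm (sincF fc _)]
  rw [integral_finsetSum _ fun j _ => (integrable_sincF_mul_sincF fc p (xs j)).const_mul _]
  simp_rw [integral_const_mul, integral_sincF_mul_sincF hfc]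

lemma integral_sincF_mul_blml_marginal {fc : ℝ} (hfc : 0 ≤ fc) {n : ℕ} {xs b : Fin n → ℝ}
    (hcb : ∀ i, ∑ j, b j * sincF fc (xs i - xs j) = n / b i) {g : ℝ → ℝ}
    (hg : ∀ x, g x = (1 / n : ℝ) * ∑ j, b j * sincF fc (x - xs j)) (i : Fin n) :
    ∫ x, sincF fc (x - xs i) * g x = 1 / b i := by
  have hn : (n : ℝ) ≠ 0 := Nat.cast_ne_zero.2 i.pos.ne'
  simp_rw [hg, mul_left_comm (sincF fc _), integral_const_mul, integral_sincF_mul_sum hfc, hcb]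
  field_simp

lemma integral_prod_sum_mul {α β ι : Type*} [MeasurableSpace α] [MeasurableSpace β]
    {μ : Measure α} {ν : Measure β} [SFinite μ] [SFinite ν] (s : Finset ι)
    {f : ι → α → ℝ} {g : ι → β → ℝ} (hf : ∀ i ∈ s, Integrable (f i) μ)
    (hg : ∀ i ∈ s, Integrable (g i) ν) :
    ∫ z, ∑ i ∈ s, f i z.1 * g i z.2 ∂μ.prod ν
      = ∑ i ∈ s, (∫ x, f i x ∂μ) * ∫ y, g i y ∂ν := by
  rw [integral_finsetSum _ fun i hi => (hf i hi).mul_prod (hg i hi)]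
  exact Finset.sum_congr rfl fun i _ => integral_prod_mul (f i) (g i)

theorem blml_cross_integral_identity_general
    (fc : ℝ) (hfc : 0 < fc) (n : ℕ)
    (xs ys : Fin n → ℝ) (a b e : Fin n → ℝ)
    (hcb : ∀ i, ∑ j, b j * sincF fc (xs i - xs j) = n / b i)
    (hce : ∀ i, ∑ j, e j * sincF fc (ys i - ys j) = n / e i)
    (gXY : ℝ × ℝ → ℝ) (gX gY : ℝ → ℝ)
    (hgXY : ∀ x y, gXY (x, y) =
      (1 / n : ℝ) * ∑ i, a i * sincF fc (x - xs i) * sincF fc (y - ys i))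
    (hgX : ∀ x, gX x = (1 / n : ℝ) * ∑ i, b i * sincF fc (x - xs i))
    (hgY : ∀ y, gY y = (1 / n : ℝ) * ∑ i, e i * sincF fc (y - ys i)) :
    ∫ p : ℝ × ℝ, gXY p * gX p.1 * gY p.2
      = (1 / n : ℝ) * ∑ i, a i / (b i * e i) := by
  have hsplit : ∀ p : ℝ × ℝ, gXY p * gX p.1 * gY p.2 = ∑ i,
      a i / n * (sincF fc (p.1 - xs i) * gX p.1) * (sincF fc (p.2 - ys i) * gY p.2) := by
    rintro ⟨x, y⟩
    rw [hgXY, Finset.mul_sum, Finset.sum_mul, Finset.sum_mul]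
    exact Finset.sum_congr rfl fun i _ => by ring
  have hX : MemLp gX 2 := by rw [funext hgX]; exact (memLp_sum_sincF fc _ b xs).const_mul _
  have hY : MemLp gY 2 := by rw [funext hgY]; exact (memLp_sum_sincF fc _ e ys).const_mul _
  have hintX : ∀ i, Integrable fun x => sincF fc (x - xs i) * gX x :=
    fun i => (memLp_sincF_comp_sub fc (xs i)).integrable_mul hX
  have hintY : ∀ i, Integrable fun y => sincF fc (y - ys i) * gY y :=
    fun i => (memLp_sincF_comp_sub fc (ys i)).integrable_mul hY
  simp_rw [hsplit, Measure.volume_eq_prod]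
  rw [integral_prod_sum_mul _ (fun i _ => (hintX i).const_mul _) (fun i _ => hintY i)]
  simp_rw [integral_const_mul, integral_sincF_mul_blml_marginal hfc.le hcb hgX,
    integral_sincF_mul_blml_marginal hfc.le hce hgY, Finset.mul_sum]
  exact Finset.sum_congr rfl fun i _ => by ring

/-- Key integral identity behind the closed-form mutual dependence estimator:
if `b` and `e` satisfy the marginal BLML constraints
`Σⱼ bⱼ s^x_{ij} = n/bᵢ` and `Σⱼ eⱼ s^y_{ij} = n/eᵢ`, then
`∫∫ g_{XY}(x,y) g_X(x) g_Y(y) dx dy = (1/n) Σᵢ aᵢ/(bᵢ eᵢ)`. -/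
theorem blml_cross_integral_identity
    (fc : ℝ) (hfc : 0 < fc) (n : ℕ) (hn : 1 ≤ n)
    (xs ys : Fin n → ℝ) (a b e : Fin n → ℝ)
    (ha : ∀ i, a i ≠ 0) (hb : ∀ i, b i ≠ 0) (he : ∀ i, e i ≠ 0)
    (hcb : ∀ i, ∑ j, b j * sincF fc (xs i - xs j) = n / b i)
    (hce : ∀ i, ∑ j, e j * sincF fc (ys i - ys j) = n / e i)
    (gXY : ℝ × ℝ → ℝ) (gX gY : ℝ → ℝ)
    (hgXY : ∀ x y, gXY (x, y) =
      (1 / n : ℝ) * ∑ i, a i * sincF fc (x - xs i) * sincF fc (y - ys i))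
    (hgX : ∀ x, gX x = (1 / n : ℝ) * ∑ i, b i * sincF fc (x - xs i))
    (hgY : ∀ y, gY y = (1 / n : ℝ) * ∑ i, e i * sincF fc (y - ys i)) :
    ∫ p : ℝ × ℝ, gXY p * gX p.1 * gY p.2
      = (1 / n : ℝ) * ∑ i, a i / (b i * e i) :=
  blml_cross_integral_identity_general fc hfc n xs ys a b e hcb hce gXY gX gY hgXY hgX hgY
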